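/- Let G = [[α, β], [β, γ]] and A = [[2, δ], [δ, 2]] be real symmetric 2×2 matrices. If both 2I − G and A − G are positive semidefinite, then (2 − α)(2 − γ) ≥ (δ/2)². -/
import Mathlib


open scoped Matrix

/-- If both `2I - G` and `A - G` are positive semidefinite, where
`G = !![α, β; β, γ]` and `A = !![2, δ; δ, 2]`, then `(2-α)(2-γ) ≥ (δ/2)²`. -/
theorem quad_disc (a b c : ℝ) (h : ∀ x y : ℝ, 0 ≤ a * x ^ 2 + 2 * b * x * y + c * y ^ 2) :
    b ^ 2 ≤ a * c := by
  have ha : 0 ≤ a := by have := h 1 0; nlinarith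
  have hc : 0 ≤ c := by have := h 0 1; nlinarith
  rcases ha.eq_or_lt with h0 | h0
  · have hb : b = 0 := by
      by_contra hb
      have hb2 : 0 < b ^ 2 := by positivity
      have := h (-(b * (c + 1))) (2 * b ^ 2)
      nlinarith [sq_nonneg b, sq_nonneg (b*(c+1))]
    nlinarith
  · have := h b (-a)
    nlinarith

theorem stmt_0 (α β γ δ : ℝ)
    (h1 : ∀ x : Fin 2 → ℝ,
      0 ≤ x ⬝ᵥ (((2 : ℝ) • (1 : Matrix (Fin 2) (Fin 2) ℝ) - !![α, β; β, γ]) *ᵥ x))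
    (h2 : ∀ x : Fin 2 → ℝ,
      0 ≤ x ⬝ᵥ ((!![(2:ℝ), δ; δ, 2] - !![α, β; β, γ]) *ᵥ x)) :
    (δ / 2) ^ 2 ≤ (2 - α) * (2 - γ) := by
  have H1 : ∀ x y : ℝ, 0 ≤ (2 - α) * x ^ 2 - 2 * β * x * y + (2 - γ) * y ^ 2 := by
    intro x y
    have := h1 ![x, y]
    simp [dotProduct, Matrix.mulVec, Fin.sum_univ_two, Matrix.one_apply] at this
    nlinarith [this]
  have H2 : ∀ x y : ℝ, 0 ≤ (2 - α) * x ^ 2 + 2 * (δ - β) * x * y + (2 - γ) * y ^ 2 := by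
    intro x y
    have := h2 ![x, y]
    simp [dotProduct, Matrix.mulVec, Fin.sum_univ_two] at this
    nlinarith [this]
  have ha : (0:ℝ) ≤ 2 - α := by have := H1 1 0; nlinarith
  have hc : (0:ℝ) ≤ 2 - γ := by have := H1 0 1; nlinarith
  have hb : (-β) ^ 2 ≤ (2 - α) * (2 - γ) :=
    quad_disc _ _ _ (fun x y => by nlinarith [H1 x y])
  have hd : (δ - β) ^ 2 ≤ (2 - α) * (2 - γ) :=
    quad_disc _ _ _ (fun x y => by nlinarith [H2 x y])
  nlinarith [sq_nonneg (β - (δ - β)), hb, hd]
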